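/- arXiv:2301.09892 — 3 statements merged into one kernel-verified Lean document; each statement's English description precedes it below -/
import Mathlib

section
/- Let X be a finite nonempty set, μ a fully supported probability mass function on X, r : X → ℝ, and let D be μ-distributed and K, conditionally on D = c, be geometric with parameter μ(c) (support {1,2,...}) and independent of the reward. Then E[K · r(D) · 1{D = c}] = r(c) for every c ∈ X. -/
/-! Conditionally on `D = c` the geometric variable `K` has mean `1 / μ c`, which exactly cancels
the probability `μ c` of the event `D = c`; the indicator kills every other value of `D`. -/

theorem tsum_succ_mul_geometric_mul_eq_inv {𝕜 : Type*} [NormedDivisionRing 𝕜] [CompleteSpace 𝕜]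
    {p : 𝕜} (hp : ‖1 - p‖ < 1) :
    ∑' k : ℕ, ((k : 𝕜) + 1) * ((1 - p) ^ k * p) = p⁻¹ := by
  have hp0 : p ≠ 0 := by rintro rfl; simp at hp
  have hmean : ∑' k : ℕ, ((k : 𝕜) + 1) * (1 - p) ^ k = (p ^ 2)⁻¹ := by
    simpa using tsum_choose_mul_geometric_of_norm_lt_one 1 hp
  simp_rw [← mul_assoc]
  rw [tsum_mul_right, hmean, pow_two, mul_inv_rev, mul_assoc, inv_mul_cancel₀ hp0, mul_one]

/-- The expectation `E[K | D = d]` appears as the series `∑ (k+1) (1 - μ d)^k μ d`. -/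
theorem stmt4_general {X : Type*} [Fintype X] [DecidableEq X]
    (μ : X → ℝ) (hpos : ∀ c, 0 < μ c) (hle : ∀ c, μ c ≤ 1)
    (r : X → ℝ) (c : X) :
    ∑ d, μ d * ((∑' k : ℕ, ((k : ℝ) + 1) * ((1 - μ d) ^ k * μ d))
        * (r d * (if d = c then 1 else 0))) = r c := by
  have hc : ‖1 - μ c‖ < 1 := by
    rw [Real.norm_eq_abs, abs_lt]
    constructor <;> linarith [hpos c, hle c]
  simp only [mul_ite, mul_one, mul_zero, Finset.sum_ite_eq', Finset.mem_univ, if_true]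
  rw [tsum_succ_mul_geometric_mul_eq_inv hc, ← mul_assoc, mul_inv_cancel₀ (hpos c).ne', one_mul]

/-- Importance weighting combined with Geometric Resampling: if `D ~ μ` (fully supported)
and, conditionally on `D = d`, `K` is geometric with parameter `μ d` (independent of the
reward), then `E[K · r(D) · 1{D = c}] = r c`. The conditional expectation of `K` is
written out as the geometric series `∑ (k+1)(1-μ d)^k μ d`. -/
theorem stmt4 {X : Type*} [Fintype X] [Nonempty X] [DecidableEq X]
    (μ : X → ℝ) (hpos : ∀ c, 0 < μ c) (hle : ∀ c, μ c ≤ 1) (hsum : ∑ c, μ c = 1)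
    (r : X → ℝ) (c : X) :
    ∑ d, μ d * ((∑' k : ℕ, ((k : ℝ) + 1) * ((1 - μ d) ^ k * μ d))
        * (r d * (if d = c then 1 else 0))) = r c :=
  stmt4_general μ hpos hle r c
end

section
/- Let V be a finite set of n vulnerabilities with values val : V → ℝ≥0 and weights w : V → ℝ≥0, and budget W ≥ 0. In the one-configuration, n-attacker-type CHOOSE-VUL instance where attacker type ψ_i has reward estimate r_{v_j, ψ_i} = -val(v_i) if i = j and 0 otherwise, each type attacks with probability 1/n, prices equal weights, and fixing a set S sets r^S_{v,ψ} = 0 for v ∈ S: the objective max over feasible S of (1/n)·Σ_i r^S_{v_i,ψ_i} equals (1/n)·(max over S with Σ_{v∈S} w(v) ≤ W of Σ_{v∈S} val(v)) minus (1/n)·Σ_i val(v_i). In particular, a feasible set S achieves objective value at least (K - Σ_i val(v_i))/n if and only if Σ_{v∈S} val(v) ≥ K. -/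
theorem Finset.sum_ite_mem_zero_neg {ι G : Type*} [Fintype ι] [DecidableEq ι] [AddCommGroup G]
    (S : Finset ι) (f : ι → G) :
    ∑ i, (if i ∈ S then 0 else -f i) = ∑ i ∈ S, f i - ∑ i, f i := by
  rw [Finset.sum_ite, Finset.sum_const_zero, zero_add, Finset.sum_neg_distrib,
    ← Finset.sum_filter_add_sum_filter_not Finset.univ (· ∈ S) f, Finset.filter_mem_eq_inter,
    Finset.univ_inter]
  abel

theorem stmt6_general (n : ℕ) (hn : 1 ≤ n) (val : Fin n → ℝ)
    (F : Finset (Finset (Fin n)))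
    (hF : F.Nonempty) :
    F.sup' hF (fun S => (1 / (n : ℝ)) * ∑ i, (if i ∈ S then 0 else -val i))
      = (1 / (n : ℝ)) * F.sup' hF (fun S => ∑ v ∈ S, val v)
        - (1 / (n : ℝ)) * ∑ i, val i
    ∧ ∀ S ∈ F, ∀ K : ℝ,
        ((K - ∑ i, val i) / (n : ℝ)
            ≤ (1 / (n : ℝ)) * ∑ i, (if i ∈ S then 0 else -val i)
          ↔ K ≤ ∑ v ∈ S, val v) := by
  have hn_pos : (0 : ℝ) < n := by exact_mod_cast hn
  simp only [Finset.sum_ite_mem_zero_neg]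
  refine ⟨?_, fun S _ K => ?_⟩
  · rw [← Finset.mul₀_sup' (by positivity), ← mul_sub]
    simp only [sub_eq_add_neg, Finset.sup'_add]
  · rw [one_div_mul_eq_div, div_le_div_iff_of_pos_right hn_pos, sub_le_sub_iff_right]

/-- KNAPSACK reduction for single-configuration CHOOSE-VUL: with `n` attacker types each
attacking with probability `1/n`, rewards `r_{v_j,ψ_i} = -val v_i` iff `i = j`, prices
equal to weights and budget `W`, the CHOOSE-VUL objective over feasible sets `S` is an
affine transformation of the knapsack value; in particular `S` achieves objective value
at least `(K - Σ val)/n` iff its knapsack value is at least `K`. -/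
theorem stmt6 (n : ℕ) (hn : 1 ≤ n) (val w : Fin n → ℝ)
    (hval : ∀ i, 0 ≤ val i) (hw : ∀ i, 0 ≤ w i) (W : ℝ) (hW : 0 ≤ W)
    (F : Finset (Finset (Fin n)))
    (hFdef : F = Finset.univ.filter (fun S : Finset (Fin n) => ∑ v ∈ S, w v ≤ W))
    (hF : F.Nonempty) :
    F.sup' hF (fun S => (1 / (n : ℝ)) * ∑ i, (if i ∈ S then 0 else -val i))
      = (1 / (n : ℝ)) * F.sup' hF (fun S => ∑ v ∈ S, val v)
        - (1 / (n : ℝ)) * ∑ i, val i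
    ∧ ∀ S ∈ F, ∀ K : ℝ,
        ((K - ∑ i, val i) / (n : ℝ)
            ≤ (1 / (n : ℝ)) * ∑ i, (if i ∈ S then 0 else -val i)
          ↔ K ≤ ∑ v ∈ S, val v) :=
  stmt6_general n hn val F hF
end

section
/- Let V be a finite set with reward estimates r : V → ℝ (all rewards ≤ 0), prices p : V → ℝ≥0 and budget b ≥ 0. Consider the problem: maximize over S ⊆ V with Σ_{v∈S} p(v) ≤ b the value min_{v ∈ V} r^S(v), where r^S(v) = 0 if v ∈ S and r(v) otherwise (with the convention min over empty complement = 0). Then the greedy algorithm that repeatedly adds the vulnerability with the minimum current r^S value (breaking ties by least price) as long as the budget permits returns an optimal solution. -/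
open Finset

/-- Pick the element of `T` minimizing `r`, breaking ties by least price `p`
(and then by the linear order on `α`). -/
noncomputable def pickMin {α : Type*} [Fintype α] [LinearOrder α] (r p : α → ℝ)
    (T : Finset α) (h : T.Nonempty) : α :=
  (ofLex ((ofLex ((T.image fun v => toLex ((r v : ℝ), toLex (p v, v)))).min'
    (h.image _))).2).2

/-- The greedy loop: repeatedly add the minimum-reward (least-price tie-break)
vulnerability among those not yet chosen, as long as the budget permits. -/
noncomputable def greedyAux {α : Type*} [Fintype α] [LinearOrder α]
    (r p : α → ℝ) (b : ℝ) : ℕ → Finset α → Finset α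
  | 0, S => S
  | (n + 1), S =>
    if h : (Finset.univ \ S).Nonempty then
      let v := pickMin r p (Finset.univ \ S) h
      if (∑ u ∈ S, p u) + p v ≤ b then greedyAux r p b n (insert v S) else S
    else S

/-- The set returned by the greedy algorithm. -/
noncomputable def greedySet {α : Type*} [Fintype α] [LinearOrder α]
    (r p : α → ℝ) (b : ℝ) : Finset α :=
  greedyAux r p b (Fintype.card α) ∅

/-- The CHOOSE-VUL objective `min_{v ∈ V} r^S(v)` where `r^S(v) = 0` for `v ∈ S`:
equivalently the minimum of `r` over `V \ S`, with the convention that the minimum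
over an empty complement is `0`. -/
noncomputable def objVal {α : Type*} [Fintype α] [DecidableEq α]
    (r : α → ℝ) (S : Finset α) : ℝ :=
  if h : (Finset.univ \ S).Nonempty then (Finset.univ \ S).inf' h r else 0

/-!
The greedy set `G` stays a reward prefix: every chosen vulnerability has reward at most that of
every unchosen one. When the loop stops, either `G` is everything, with value `0`, which no set
exceeds since rewards are `≤ 0`; or the next candidate `w`, a least reward outside `G` (so the value
of `G` is `r w`), does not fit in the budget. A set whose value exceeds `r w` must contain every
`v` with `r v ≤ r w`, hence `G ∪ {w}`, and so costs more than `b`.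
-/

section Objective

variable {α : Type*} [Fintype α] [DecidableEq α] (r : α → ℝ)

lemma objVal_univ : objVal r univ = 0 := by
  simp [objVal]

lemma objVal_nonpos (hr : ∀ v, r v ≤ 0) (S : Finset α) : objVal r S ≤ 0 := by
  unfold objVal
  split_ifs with h
  · obtain ⟨x, hx⟩ := h
    exact (inf'_le r hx).trans (hr x)
  · exact le_rfl

variable {r}

lemma objVal_le_of_notMem {S : Finset α} {v : α} (hv : v ∉ S) : objVal r S ≤ r v := by
  have hv' : v ∈ univ \ S := mem_sdiff.mpr ⟨mem_univ v, hv⟩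
  rw [objVal, dif_pos ⟨v, hv'⟩]
  exact inf'_le r hv'

lemma objVal_eq_of_isLeast {S : Finset α} {w : α} (hw : w ∉ S) (hmin : ∀ v ∉ S, r w ≤ r v) :
    objVal r S = r w := by
  have hne : (univ \ S).Nonempty := ⟨w, mem_sdiff.mpr ⟨mem_univ w, hw⟩⟩
  refine (objVal_le_of_notMem hw).antisymm ?_
  rw [objVal, dif_pos hne]
  exact le_inf' hne r fun v hv => hmin v (mem_sdiff.mp hv).2

lemma mem_of_le_of_lt_objVal {S : Finset α} {x : α} {c : ℝ} (hx : r x ≤ c)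
    (hc : c < objVal r S) : x ∈ S := by
  by_contra hxS
  linarith [objVal_le_of_notMem (r := r) hxS]

end Objective

section Greedy

variable {α : Type*} [Fintype α] [LinearOrder α] (r p : α → ℝ)

lemma pickMin_spec (T : Finset α) (h : T.Nonempty) :
    pickMin r p T h ∈ T ∧ ∀ v ∈ T, r (pickMin r p T h) ≤ r v := by
  set key : α → Lex (ℝ × Lex (ℝ × α)) := fun v => toLex (r v, toLex (p v, v))
  obtain ⟨w, hw, hkey⟩ := mem_image.mp (min'_mem (T.image key) (h.image key))
  have hpick : pickMin r p T h = w := congrArg (fun x => (ofLex (ofLex x).2).2) hkey.symm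
  refine ⟨hpick ▸ hw, fun v hv => ?_⟩
  have hle : key w ≤ key v := hkey ▸ min'_le _ _ (mem_image_of_mem key hv)
  rw [hpick]
  rcases Prod.Lex.le_iff.mp hle with hlt | ⟨heq, -⟩
  exacts [hlt.le, heq.le]

def IsRewardPrefix (S : Finset α) : Prop :=
  ∀ g ∈ S, ∀ v ∉ S, r g ≤ r v

variable {r p} {b : ℝ}

lemma sum_greedyAux_le (n : ℕ) {S : Finset α} (hS : ∑ u ∈ S, p u ≤ b) :
    ∑ u ∈ greedyAux r p b n S, p u ≤ b := by
  induction n generalizing S with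
  | zero => exact hS
  | succ n ih =>
    dsimp only [greedyAux]
    split_ifs with hne hfit
    · exact ih (by rwa [sum_insert (mem_sdiff.mp (pickMin_spec r p _ hne).1).2, add_comm])
    all_goals exact hS

lemma isRewardPrefix_greedyAux (n : ℕ) {S : Finset α} (hS : IsRewardPrefix r S) :
    IsRewardPrefix r (greedyAux r p b n S) := by
  induction n generalizing S with
  | zero => exact hS
  | succ n ih =>
    dsimp only [greedyAux]
    split_ifs with hne
    · apply ih
      obtain ⟨-, hmin⟩ := pickMin_spec r p _ hne
      intro g hg v hv
      rw [mem_insert, not_or] at hv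
      rcases mem_insert.mp hg with rfl | hgS
      · exact hmin v (mem_sdiff.mpr ⟨mem_univ v, hv.2⟩)
      · exact hS g hgS v hv.2
    all_goals exact hS

lemma greedyAux_eq_univ_or_blocked (n : ℕ) {S : Finset α}
    (hcard : #(univ \ S) ≤ n) :
    greedyAux r p b n S = univ ∨ ∃ w ∉ greedyAux r p b n S,
      (∀ v ∉ greedyAux r p b n S, r w ≤ r v) ∧ b < ∑ u ∈ greedyAux r p b n S, p u + p w := by
  induction n generalizing S with
  | zero =>
    left
    dsimp only [greedyAux]
    exact univ_subset_iff.mp (sdiff_eq_empty_iff_subset.mp (card_eq_zero.mp (by omega)))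
  | succ n ih =>
    dsimp only [greedyAux]
    split_ifs with hne hfit
    · apply ih
      obtain ⟨hmem, -⟩ := pickMin_spec r p _ hne
      rw [sdiff_insert, card_erase_of_mem hmem]
      omega
    · obtain ⟨hmem, hmin⟩ := pickMin_spec r p _ hne
      exact Or.inr ⟨_, (mem_sdiff.mp hmem).2,
        fun v hv => hmin v (mem_sdiff.mpr ⟨mem_univ v, hv⟩), not_le.mp hfit⟩
    · left
      exact univ_subset_iff.mp (sdiff_eq_empty_iff_subset.mp (not_nonempty_iff_eq_empty.mp hne))

end Greedy

lemma objVal_le_of_blocked {α : Type*} [Fintype α] [DecidableEq α] {r p : α → ℝ} {b : ℝ}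
    (hp : ∀ v, 0 ≤ p v) {G S : Finset α} {w : α} (hG : IsRewardPrefix r G) (hw : w ∉ G)
    (hblock : b < ∑ u ∈ G, p u + p w) (hS : ∑ u ∈ S, p u ≤ b) : objVal r S ≤ r w := by
  by_contra! hlt
  have hsub : insert w G ⊆ S := fun x hx => by
    rcases mem_insert.mp hx with rfl | hxG
    · exact mem_of_le_of_lt_objVal le_rfl hlt
    · exact mem_of_le_of_lt_objVal (hG x hxG w hw) hlt
  have hcost := sum_le_sum_of_subset_of_nonneg hsub fun v _ _ => hp v
  rw [sum_insert hw] at hcost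
  linarith

theorem stmt7_general {α : Type*} [Fintype α] [LinearOrder α]
    (r p : α → ℝ) (hr : ∀ v, r v ≤ 0) (hp : ∀ v, 0 ≤ p v) (b : ℝ) (hb : 0 ≤ b) :
    (∑ v ∈ greedySet r p b, p v ≤ b) ∧
    ∀ S : Finset α, ∑ v ∈ S, p v ≤ b → objVal r S ≤ objVal r (greedySet r p b) := by
  refine ⟨sum_greedyAux_le _ (by simpa using hb), fun S hS => ?_⟩
  have hG : IsRewardPrefix r (greedySet r p b) :=
    isRewardPrefix_greedyAux _ fun g hg => absurd hg (notMem_empty g)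
  rcases greedyAux_eq_univ_or_blocked (r := r) (p := p) (b := b) (Fintype.card α) (S := ∅)
      (card_le_univ _) with hU | ⟨w, hw, hmin, hblock⟩
  · rw [greedySet, hU, objVal_univ]
    exact objVal_nonpos r hr S
  · rw [greedySet, objVal_eq_of_isLeast hw hmin]
    exact objVal_le_of_blocked hp hG hw hblock hS

/-- Greedy optimality for single-attacker CHOOSE-VUL: with non-positive rewards,
nonnegative prices and budget `b ≥ 0`, the greedy set is feasible and attains the
maximum objective value among all feasible sets. -/
theorem stmt7 {α : Type*} [Fintype α] [LinearOrder α] [Nonempty α]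
    (r p : α → ℝ) (hr : ∀ v, r v ≤ 0) (hp : ∀ v, 0 ≤ p v) (b : ℝ) (hb : 0 ≤ b) :
    (∑ v ∈ greedySet r p b, p v ≤ b) ∧
    ∀ S : Finset α, ∑ v ∈ S, p v ≤ b → objVal r S ≤ objVal r (greedySet r p b) :=
  stmt7_general r p hr hp b hb
end
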